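/- arXiv:2411.12962 — 3 statements merged into one kernel-verified Lean document; each statement's English description precedes it below -/
import Mathlib

section
/- Let X : [0, T] → ℝ^{2N} be a C¹ curve with components X(t) = (X₁(t), X₂(t)) such that H(X₁(t)) is invertible for every t and the velocity-consistency condition Ẋ₁(t) = X₂(t) holds for all t ∈ [0, T]. Then the action functional of X equals the total squared control effort: A(X) = ∫₀ᵀ ‖u(t)‖² dt, where u(t) = H(X₁(t)) Ẋ₂(t) + C(X(t)) is the extracted control. -/
open Matrix

noncomputable section AGHFSetup

/-- Bridge from plain vectors to `EuclideanSpace` (they are definitionally equal). -/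
def toEuc {N : ℕ} (v : Fin N → ℝ) : EuclideanSpace ℝ (Fin N) := WithLp.toLp 2 v

/-- First (position) block of a state `x ∈ ℝ^{2N}`. -/
def proj1 {N : ℕ} (x : EuclideanSpace ℝ (Fin N ⊕ Fin N)) : EuclideanSpace ℝ (Fin N) :=
  WithLp.toLp 2 (fun i => x (Sum.inl i))

/-- Second (velocity) block of a state `x ∈ ℝ^{2N}`. -/
def proj2 {N : ℕ} (x : EuclideanSpace ℝ (Fin N ⊕ Fin N)) : EuclideanSpace ℝ (Fin N) :=
  WithLp.toLp 2 (fun i => x (Sum.inr i))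

/-- The pair `(a, b) ∈ ℝ^{2N}` built from `a, b ∈ ℝᴺ`. -/
def pair2 {N : ℕ} (a b : EuclideanSpace ℝ (Fin N)) : EuclideanSpace ℝ (Fin N ⊕ Fin N) :=
  WithLp.toLp 2 (Sum.elim a b)

/-- The drift `F_d(x) = (x₂, −H(x₁)⁻¹ C(x))` (with `B = I`). -/
def driftFd {N : ℕ} (H : EuclideanSpace ℝ (Fin N) → Matrix (Fin N) (Fin N) ℝ)
    (C : EuclideanSpace ℝ (Fin N ⊕ Fin N) → EuclideanSpace ℝ (Fin N))
    (x : EuclideanSpace ℝ (Fin N ⊕ Fin N)) : EuclideanSpace ℝ (Fin N ⊕ Fin N) :=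
  pair2 (proj2 x) (WithLp.toLp 2 (-((H (proj1 x))⁻¹ *ᵥ C x)))

/-- The AGHF metric `G(x) = [[k • I, 0], [0, H(x₁)ᵀ H(x₁)]]`. -/
def metricG {N : ℕ} (H : EuclideanSpace ℝ (Fin N) → Matrix (Fin N) (Fin N) ℝ) (k : ℝ)
    (x : EuclideanSpace ℝ (Fin N ⊕ Fin N)) : Matrix (Fin N ⊕ Fin N) (Fin N ⊕ Fin N) ℝ :=
  Matrix.fromBlocks (k • (1 : Matrix (Fin N) (Fin N) ℝ)) 0 0 ((H (proj1 x))ᵀ * H (proj1 x))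

/-- The AGHF Lagrangian `L(x, v) = (v − F_d(x))ᵀ G(x) (v − F_d(x))`. -/
def lagrangianL {N : ℕ} (H : EuclideanSpace ℝ (Fin N) → Matrix (Fin N) (Fin N) ℝ)
    (C : EuclideanSpace ℝ (Fin N ⊕ Fin N) → EuclideanSpace ℝ (Fin N)) (k : ℝ)
    (x v : EuclideanSpace ℝ (Fin N ⊕ Fin N)) : ℝ :=
  (v - driftFd H C x) ⬝ᵥ (metricG H k x *ᵥ (v - driftFd H C x))

end AGHFSetup

/-!
Velocity consistency `v₁ = x₂` kills the first block of `v - F_d(x)`, so only the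
`HᵀH`-weighted second block `v₂ + H⁻¹C` survives in the Lagrangian, and
`(v₂ + H⁻¹C)ᵀ HᵀH (v₂ + H⁻¹C) = ‖H v₂ + C‖²`. The two integrands therefore agree
pointwise on `[0, T]`.
-/

section BlockQuadraticForm

variable {R m n : Type*} [Fintype m] [Fintype n]

theorem sumElim_dotProduct_fromBlocks_zero_mulVec [NonUnitalNonAssocSemiring R]
    (A : Matrix m m R) (D : Matrix n n R) (a : m → R) (b : n → R) :
    Sum.elim a b ⬝ᵥ (fromBlocks A 0 0 D *ᵥ Sum.elim a b) = a ⬝ᵥ (A *ᵥ a) + b ⬝ᵥ (D *ᵥ b) := by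
  simp only [fromBlocks_mulVec, Sum.elim_comp_inl, Sum.elim_comp_inr, zero_mulVec, add_zero,
    zero_add, sumElim_dotProduct_sumElim]

theorem dotProduct_transpose_mul_mulVec [CommSemiring R] (M : Matrix m n R) (b : n → R) :
    b ⬝ᵥ ((Mᵀ * M) *ᵥ b) = (M *ᵥ b) ⬝ᵥ (M *ᵥ b) := by
  rw [← mulVec_mulVec, dotProduct_mulVec, vecMul_transpose]

end BlockQuadraticForm

theorem EuclideanSpace.real_norm_sq_eq_dotProduct {n : Type*} [Fintype n]
    (x : EuclideanSpace ℝ n) : ‖x‖ ^ 2 = x ⬝ᵥ x := by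
  rw [EuclideanSpace.real_norm_sq_eq]
  simp only [dotProduct, sq]

section AGHF

variable {N : ℕ} (H : EuclideanSpace ℝ (Fin N) → Matrix (Fin N) (Fin N) ℝ)
  (C : EuclideanSpace ℝ (Fin N ⊕ Fin N) → EuclideanSpace ℝ (Fin N))
  (k : ℝ) (x v : EuclideanSpace ℝ (Fin N ⊕ Fin N))

theorem ofLp_sub_driftFd :
    WithLp.ofLp (v - driftFd H C x) =
      Sum.elim (WithLp.ofLp (proj1 v - proj2 x))
        (WithLp.ofLp (proj2 v) + (H (proj1 x))⁻¹ *ᵥ C x) := by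
  funext i
  cases i <;> simp [driftFd, pair2, proj1, proj2, sub_eq_add_neg]

theorem lagrangianL_eq :
    lagrangianL H C k x v = k * ‖proj1 v - proj2 x‖ ^ 2 +
      ‖toEuc (H (proj1 x) *ᵥ (proj2 v + (H (proj1 x))⁻¹ *ᵥ C x))‖ ^ 2 := by
  -- the two copies of `v - driftFd H C x` in `lagrangianL` elaborate with `ofLp` at different
  -- places; the first two rewrites bring them to the same form
  rw [lagrangianL, metricG, WithLp.ofLp_sub, ← WithLp.ofLp_sub, ofLp_sub_driftFd,
    sumElim_dotProduct_fromBlocks_zero_mulVec,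
    dotProduct_transpose_mul_mulVec, EuclideanSpace.real_norm_sq_eq_dotProduct,
    EuclideanSpace.real_norm_sq_eq_dotProduct, smul_mulVec, one_mulVec, dotProduct_smul,
    smul_eq_mul]
  rfl

theorem lagrangianL_eq_norm_sq_control (hH : IsUnit (H (proj1 x)))
    (hvel : proj1 v = proj2 x) :
    lagrangianL H C k x v = ‖toEuc (H (proj1 x) *ᵥ proj2 v) + C x‖ ^ 2 := by
  have hdet : IsUnit (H (proj1 x)).det := (isUnit_iff_isUnit_det _).mp hH
  rw [lagrangianL_eq, hvel, sub_self, norm_zero, mulVec_add, mulVec_mulVec,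
    mul_nonsing_inv _ hdet, one_mulVec, zero_pow two_ne_zero, mul_zero, zero_add]
  rfl

end AGHF

theorem action_eq_controlSq_of_velocityConsistent_general (N : ℕ)
    (H : EuclideanSpace ℝ (Fin N) → Matrix (Fin N) (Fin N) ℝ)
    (C : EuclideanSpace ℝ (Fin N ⊕ Fin N) → EuclideanSpace ℝ (Fin N))
    (k : ℝ) (T : ℝ) (hT : 0 ≤ T)
    (X : ℝ → EuclideanSpace ℝ (Fin N ⊕ Fin N))
    (hH : ∀ t ∈ Set.Icc (0 : ℝ) T, IsUnit (H (proj1 (X t))))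
    (hvel : ∀ t ∈ Set.Icc (0 : ℝ) T, proj1 (deriv X t) = proj2 (X t)) :
    ∫ t in (0 : ℝ)..T, lagrangianL H C k (X t) (deriv X t) =
      ∫ t in (0 : ℝ)..T,
        ‖toEuc (H (proj1 (X t)) *ᵥ proj2 (deriv X t)) + C (X t)‖ ^ 2 := by
  refine intervalIntegral.integral_congr fun t ht => ?_
  rw [Set.uIcc_of_le hT] at ht
  exact lagrangianL_eq_norm_sq_control H C k _ _ (hH t ht) (hvel t ht)

/-- If a `C¹` curve `X : [0, T] → ℝ^{2N}` has `H(X₁(t))` invertible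
for every `t` and satisfies the velocity-consistency condition `Ẋ₁(t) = X₂(t)` on
`[0, T]`, then its action equals the total squared control effort:
`A(X) = ∫₀ᵀ ‖u(t)‖² dt`, where `u(t) = H(X₁(t)) Ẋ₂(t) + C(X(t))`. -/
theorem action_eq_controlSq_of_velocityConsistent (N : ℕ) (hN : 0 < N)
    (H : EuclideanSpace ℝ (Fin N) → Matrix (Fin N) (Fin N) ℝ) (hHcont : Continuous H)
    (C : EuclideanSpace ℝ (Fin N ⊕ Fin N) → EuclideanSpace ℝ (Fin N)) (hCcont : Continuous C)
    (k : ℝ) (hk : 0 < k) (T : ℝ) (hT : 0 ≤ T)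
    (X : ℝ → EuclideanSpace ℝ (Fin N ⊕ Fin N)) (hX : ContDiff ℝ 1 X)
    (hH : ∀ t ∈ Set.Icc (0 : ℝ) T, IsUnit (H (proj1 (X t))))
    (hvel : ∀ t ∈ Set.Icc (0 : ℝ) T, proj1 (deriv X t) = proj2 (X t)) :
    ∫ t in (0 : ℝ)..T, lagrangianL H C k (X t) (deriv X t) =
      ∫ t in (0 : ℝ)..T,
        ‖toEuc (H (proj1 (X t)) *ᵥ proj2 (deriv X t)) + C (X t)‖ ^ 2 :=
  action_eq_controlSq_of_velocityConsistent_general N H C k T hT X hH hvel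
end

section
/- (Lemma 1(a) of the paper.) Let X : [0, T] × [0, s_max] → ℝ^{2N} be C² (jointly in (t, s)) and satisfy the AGHF PDE ∂X/∂s(t, s) = G(X(t,s))⁻¹ ( d/dt [∇_v L(X(t,s), ∂X/∂t(t,s))] − ∇_x L(X(t,s), ∂X/∂t(t,s)) ) for all (t, s), together with the boundary conditions X(0, s) = x₀ and X(T, s) = x_f for all s ∈ [0, s_max]. Then the function s ↦ A(X(·, s)) is differentiable on (0, s_max) with d/ds A(X(·, s)) ≤ 0 for every s ∈ (0, s_max); in particular it is nonincreasing. -/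
open Matrix

attribute [local instance] Matrix.normedAddCommGroup Matrix.normedSpace

noncomputable section

/-- The AGHF Lagrangian `L(x, v) = (v − F_d(x))ᵀ G(x) (v − F_d(x))` for a general
drift `F_d` and metric `G` on `ℝ^{2N}`. -/
def lagGen {n : ℕ} (Fd : EuclideanSpace ℝ (Fin n) → EuclideanSpace ℝ (Fin n))
    (G : EuclideanSpace ℝ (Fin n) → Matrix (Fin n) (Fin n) ℝ)
    (x v : EuclideanSpace ℝ (Fin n)) : ℝ :=
  (v - Fd x) ⬝ᵥ (G x *ᵥ (v - Fd x))

end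

section AuxAGHF

open RealInnerProductSpace

noncomputable section

variable {n : ℕ}

abbrev Ee (n : ℕ) := EuclideanSpace ℝ (Fin n)

lemma dot_eq_inner (a b : Ee n) : (a : Fin n → ℝ) ⬝ᵥ (b : Fin n → ℝ) = ⟪a, b⟫ := by
  simp [dotProduct, PiLp.inner_apply, RCLike.inner_apply, mul_comm]

/-- matrix action as a CLM on Euclidean space -/
def mulE (M : Matrix (Fin n) (Fin n) ℝ) : Ee n →L[ℝ] Ee n :=
  LinearMap.toContinuousLinearMap (Matrix.toEuclideanLin M)

lemma mulE_apply (M : Matrix (Fin n) (Fin n) ℝ) (v : Ee n) :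
    (mulE M v : Fin n → ℝ) = M *ᵥ (v : Fin n → ℝ) := rfl

lemma lagGen_eq_inner (Fd : Ee n → Ee n) (G : Ee n → Matrix (Fin n) (Fin n) ℝ)
    (x v : Ee n) : lagGen Fd G x v = ⟪v - Fd x, mulE (G x) (v - Fd x)⟫ := by
  rw [← dot_eq_inner]; rfl

lemma mulE_symm {M : Matrix (Fin n) (Fin n) ℝ} (hM : M.IsSymm) (a b : Ee n) :
    ⟪mulE M a, b⟫ = ⟪a, mulE M b⟫ := by
  simp only [PiLp.inner_apply, RCLike.inner_apply, conj_trivial]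
  show ∑ i, b i * (M *ᵥ (a : Fin n → ℝ)) i = ∑ i, (M *ᵥ (b : Fin n → ℝ)) i * a i
  simp only [mulVec, dotProduct, Finset.sum_mul, Finset.mul_sum]
  rw [Finset.sum_comm]
  refine Finset.sum_congr rfl fun i _ => Finset.sum_congr rfl fun j _ => ?_
  have : M j i = M i j := hM.apply i j
  ring_nf
  rw [this]
  ring

attribute [local instance] Matrix.normedAddCommGroup Matrix.normedSpace

/-- `mulE` as a linear map in the matrix argument. -/
def mulELM : Matrix (Fin n) (Fin n) ℝ →ₗ[ℝ] (Ee n →L[ℝ] Ee n) :=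
  (LinearMap.toContinuousLinearMap (E := Ee n)).toLinearMap.comp
    (Matrix.toEuclideanLin (𝕜 := ℝ) (m := Fin n) (n := Fin n)).toLinearMap

def mulECLM : Matrix (Fin n) (Fin n) ℝ →L[ℝ] (Ee n →L[ℝ] Ee n) :=
  LinearMap.toContinuousLinearMap mulELM

lemma mulECLM_apply (M : Matrix (Fin n) (Fin n) ℝ) : mulECLM M = mulE M := rfl

variable {Fd : Ee n → Ee n} {G : Ee n → Matrix (Fin n) (Fin n) ℝ}

lemma contDiff_lag (hFd : ContDiff ℝ 2 Fd) (hG : ContDiff ℝ 2 G) :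
    ContDiff ℝ 2 (fun p : Ee n × Ee n => lagGen Fd G p.1 p.2) := by
  have h1 : ContDiff ℝ 2 (fun p : Ee n × Ee n => p.2 - Fd p.1) :=
    contDiff_snd.sub (hFd.comp contDiff_fst)
  have h2 : ContDiff ℝ 2 (fun p : Ee n × Ee n => mulE (G p.1) (p.2 - Fd p.1)) := by
    have := (isBoundedBilinearMap_apply (𝕜 := ℝ) (E := Ee n) (F := Ee n)).contDiff (n := 2)
    exact this.comp ((((mulECLM).contDiff).comp (hG.comp contDiff_fst)).prodMk h1)
  have : (fun p : Ee n × Ee n => lagGen Fd G p.1 p.2)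
      = fun p => ⟪p.2 - Fd p.1, mulE (G p.1) (p.2 - Fd p.1)⟫ := by
    funext p; exact lagGen_eq_inner Fd G p.1 p.2
  rw [this]
  exact h1.inner ℝ h2

lemma hasGradientAt_lag_v (hsymm : ∀ x, (G x).IsSymm) (x v : Ee n) :
    HasGradientAt (fun w => lagGen Fd G x w) ((2:ℝ) • mulE (G x) (v - Fd x)) v := by
  have hu : HasFDerivAt (fun w : Ee n => w - Fd x) (ContinuousLinearMap.id ℝ (Ee n)) v := by
    simpa using (hasFDerivAt_id v).sub_const (Fd x)
  have hg : HasFDerivAt (fun w : Ee n => mulE (G x) (w - Fd x)) (mulE (G x)) v := by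
    have hfun : (fun w : Ee n => mulE (G x) (w - Fd x))
        = fun w => mulE (G x) w - mulE (G x) (Fd x) := by
      funext w; rw [map_sub]
    rw [hfun]
    simpa using ((mulE (G x)).hasFDerivAt (x := v)).sub_const (mulE (G x) (Fd x))
  have hinner := hu.inner ℝ hg
  have heq : (fun w : Ee n => lagGen Fd G x w) = fun w => ⟪w - Fd x, mulE (G x) (w - Fd x)⟫ := by
    funext w; exact lagGen_eq_inner Fd G x w
  rw [heq, hasGradientAt_iff_hasFDerivAt]
  refine hinner.congr_fderiv ?_
  apply ContinuousLinearMap.ext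
  intro h
  simp only [ContinuousLinearMap.comp_apply, ContinuousLinearMap.prod_apply,
    ContinuousLinearMap.id_apply, fderivInnerCLM_apply, InnerProductSpace.toDual_apply_apply]
  rw [real_inner_smul_left, ← mulE_symm (hsymm x) (v - Fd x) h, real_inner_comm h]
  ring

lemma gradient_lag_v (hsymm : ∀ x, (G x).IsSymm) (x v : Ee n) :
    gradient (fun w => lagGen Fd G x w) v = (2:ℝ) • mulE (G x) (v - Fd x) :=
  (hasGradientAt_lag_v hsymm x v).gradient

lemma inner_gradient_slice {f : Ee n × Ee n → ℝ} {x v : Ee n}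
    (hdiff : DifferentiableAt ℝ f (x, v)) (h k : Ee n) :
    fderiv ℝ f (x, v) (h, k)
      = ⟪gradient (fun y => f (y, v)) x, h⟫ + ⟪gradient (fun w => f (x, w)) v, k⟫ := by
  have h1 : HasFDerivAt (fun y : Ee n => f (y, v))
      ((fderiv ℝ f (x, v)).comp (ContinuousLinearMap.inl ℝ (Ee n) (Ee n))) x :=
    hdiff.hasFDerivAt.comp x (hasFDerivAt_prodMk_left x v)
  have h2 : HasFDerivAt (fun w : Ee n => f (x, w))
      ((fderiv ℝ f (x, v)).comp (ContinuousLinearMap.inr ℝ (Ee n) (Ee n))) v :=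
    hdiff.hasFDerivAt.comp v (hasFDerivAt_prodMk_right x v)
  rw [h1.hasGradientAt.gradient, h2.hasGradientAt.gradient]
  rw [InnerProductSpace.toDual_symm_apply, InnerProductSpace.toDual_symm_apply]
  have : (h, k) = ((h, 0) : Ee n × Ee n) + (0, k) := by simp
  rw [this, map_add]
  rfl

section curves
variable {Em : Type*} [NormedAddCommGroup Em] [NormedSpace ℝ Em]

lemma hasDerivAt_fst_slice {f : ℝ × ℝ → Em} {t s : ℝ} (hf : DifferentiableAt ℝ f (t, s)) :
    HasDerivAt (fun τ => f (τ, s)) (fderiv ℝ f (t, s) (1, 0)) t := by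
  have h := hf.hasFDerivAt.comp t (hasFDerivAt_prodMk_left (𝕜 := ℝ) t s)
  simpa [Function.comp_def] using h.hasDerivAt

lemma hasDerivAt_snd_slice {f : ℝ × ℝ → Em} {t s : ℝ} (hf : DifferentiableAt ℝ f (t, s)) :
    HasDerivAt (fun σ => f (t, σ)) (fderiv ℝ f (t, s) (0, 1)) s := by
  have h := hf.hasFDerivAt.comp s (hasFDerivAt_prodMk_right t s)
  simpa [Function.comp_def] using h.hasDerivAt

lemma contDiff_fderiv_apply {f : ℝ × ℝ → Em} (hf : ContDiff ℝ 2 f) (w : ℝ × ℝ) :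
    ContDiff ℝ 1 (fun p => fderiv ℝ f p w) := by
  have h : ContDiff ℝ 1 (fderiv ℝ f) := hf.fderiv_right (by norm_num)
  exact ((ContinuousLinearMap.apply ℝ Em w).contDiff).comp h

lemma fderiv_fderiv_symm {f : ℝ × ℝ → Em} (hf : ContDiff ℝ 2 f) (p : ℝ × ℝ) (v w : ℝ × ℝ) :
    fderiv ℝ (fun q => fderiv ℝ f q v) p w = fderiv ℝ (fun q => fderiv ℝ f q w) p v := by
  have h1 : ContDiff ℝ 1 (fderiv ℝ f) := hf.fderiv_right (by norm_num)
  have hd : DifferentiableAt ℝ (fderiv ℝ f) p := h1.differentiable (by norm_num) p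
  have key : ∀ u w', fderiv ℝ (fun q => fderiv ℝ f q u) p w'
      = fderiv ℝ (fderiv ℝ f) p w' u := by
    intro u w'
    have hcomp := ((ContinuousLinearMap.apply ℝ Em u).hasFDerivAt
        (x := fderiv ℝ f p)).comp p hd.hasFDerivAt
    have := hcomp.fderiv
    calc fderiv ℝ (fun q => fderiv ℝ f q u) p w'
        = (((ContinuousLinearMap.apply ℝ Em u).comp (fderiv ℝ (fderiv ℝ f) p)) : _) w' := by
          rw [← this]; rfl
      _ = fderiv ℝ (fderiv ℝ f) p w' u := rfl
  rw [key v w, key w v]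
  exact second_derivative_symmetric
    (fun y => ((hf.differentiable (by norm_num)) y).hasFDerivAt) hd.hasFDerivAt w v

end curves

lemma inner_gradient_slice_lag {Fd : Ee n → Ee n} {G : Ee n → Matrix (Fin n) (Fin n) ℝ}
    (hFd : ContDiff ℝ 2 Fd) (hG : ContDiff ℝ 2 G) (x v h k : Ee n) :
    fderiv ℝ (fun pp : Ee n × Ee n => lagGen Fd G pp.1 pp.2) (x, v) (h, k)
      = ⟪gradient (fun y => lagGen Fd G y v) x, h⟫
        + ⟪gradient (fun w => lagGen Fd G x w) v, k⟫ :=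
  inner_gradient_slice (((contDiff_lag hFd hG).differentiable (by norm_num)) (x, v)) h k

end

end AuxAGHF

open RealInnerProductSpace

/-- **Lemma 1(a) of the paper.**  If `X : [0,T] × [0,s_max] → ℝ^{2N}`
is `C²` and satisfies the AGHF PDE
`∂X/∂s = G(X)⁻¹ ( d/dt[∇_v L(X, ∂X/∂t)] − ∇_x L(X, ∂X/∂t) )`
with fixed boundary conditions `X(0,s) = x₀`, `X(T,s) = x_f`, then the function
`s ↦ A(X(·,s)) = ∫₀ᵀ L(X(t,s), ∂X/∂t(t,s)) dt` is differentiable on `(0, s_max)` with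
nonpositive derivative; in particular it is nonincreasing. -/
theorem action_nonincreasing_along_AGHF (N : ℕ) (hN : 0 < N)
    (T : ℝ) (hT : 0 < T) (smax : ℝ) (hsmax : 0 < smax)
    (Fd : EuclideanSpace ℝ (Fin (2 * N)) → EuclideanSpace ℝ (Fin (2 * N)))
    (hFd : ContDiff ℝ 2 Fd)
    (G : EuclideanSpace ℝ (Fin (2 * N)) → Matrix (Fin (2 * N)) (Fin (2 * N)) ℝ)
    (hG : ContDiff ℝ 2 G)
    (hGsymm : ∀ x, (G x).IsSymm) (hGpos : ∀ x, (G x).PosDef)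
    (x₀ xf : EuclideanSpace ℝ (Fin (2 * N)))
    (X : ℝ → ℝ → EuclideanSpace ℝ (Fin (2 * N)))
    (hX : ContDiff ℝ 2 (fun p : ℝ × ℝ => X p.1 p.2))
    (hbd : ∀ s ∈ Set.Icc (0 : ℝ) smax, X 0 s = x₀ ∧ X T s = xf)
    (hPDE : ∀ t ∈ Set.Icc (0 : ℝ) T, ∀ s ∈ Set.Icc (0 : ℝ) smax,
      deriv (fun σ => X t σ) s =
        (G (X t s))⁻¹ *ᵥ
          ((deriv (fun τ =>
              gradient (fun w => lagGen Fd G (X τ s) w) (deriv (fun τ' => X τ' s) τ)) t)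
            - gradient (fun y => lagGen Fd G y (deriv (fun τ => X τ s) t)) (X t s))) :
    ∀ s ∈ Set.Ioo (0 : ℝ) smax,
      DifferentiableAt ℝ
        (fun σ => ∫ t in (0 : ℝ)..T, lagGen Fd G (X t σ) (deriv (fun τ => X τ σ) t)) s ∧
      deriv
        (fun σ => ∫ t in (0 : ℝ)..T, lagGen Fd G (X t σ) (deriv (fun τ => X τ σ) t)) s ≤ 0 := by
  intro s hs
  obtain ⟨hs0, hs1⟩ := hs
  -- joint map and its partial derivatives
  set Y : ℝ × ℝ → EuclideanSpace ℝ (Fin (2 * N)) := fun p => X p.1 p.2 with hYdef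
  have hY : ContDiff ℝ 2 Y := hX
  have hYd : ∀ p, DifferentiableAt ℝ Y p := fun p => (hY.differentiable (by norm_num)) p
  set Z : ℝ × ℝ → EuclideanSpace ℝ (Fin (2 * N)) := fun p => fderiv ℝ Y p (1, 0) with hZdef
  set W' : ℝ × ℝ → EuclideanSpace ℝ (Fin (2 * N)) := fun p => fderiv ℝ Y p (0, 1) with hWdef
  have hZt : ∀ (t σ : ℝ), deriv (fun τ => X τ σ) t = Z (t, σ) := fun t σ =>
    (hasDerivAt_fst_slice (hYd (t, σ))).deriv
  have hWs : ∀ (t σ : ℝ), deriv (fun σ' => X t σ') σ = W' (t, σ) := fun t σ =>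
    (hasDerivAt_snd_slice (hYd (t, σ))).deriv
  have hZ1 : ContDiff ℝ 1 Z := contDiff_fderiv_apply hY (1, 0)
  have hW1 : ContDiff ℝ 1 W' := contDiff_fderiv_apply hY (0, 1)
  -- the integrand as a jointly C¹ function
  set Φ : ℝ × ℝ → ℝ := fun p => lagGen Fd G (Y p) (Z p) with hΦdef
  have hΦ : ContDiff ℝ 1 Φ :=
    ((contDiff_lag hFd hG).of_le one_le_two).comp ((hY.of_le one_le_two).prodMk hZ1)
  obtain ⟨hΦdiff, hΦfc⟩ := contDiff_one_iff_fderiv.mp hΦ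
  set D : ℝ × ℝ → ℝ := fun p => fderiv ℝ Φ p (0, 1) with hDdef
  have hDc : Continuous D :=
    ((ContinuousLinearMap.apply ℝ ℝ ((0 : ℝ), (1 : ℝ))).continuous).comp hΦfc
  -- the action functional, rewritten through Φ
  have hAeq : (fun σ => ∫ t in (0 : ℝ)..T, lagGen Fd G (X t σ) (deriv (fun τ => X τ σ) t))
      = fun σ => ∫ t in (0 : ℝ)..T, Φ (t, σ) := by
    funext σ
    refine intervalIntegral.integral_congr fun t _ => ?_
    rw [hZt t σ]
  -- differentiation under the integral sign
  obtain ⟨C, hC⟩ := ((isCompact_uIcc (a := (0:ℝ)) (b := T)).prod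
    (isCompact_closedBall s 1)).exists_bound_of_continuousOn hDc.continuousOn
  have hdom := intervalIntegral.hasDerivAt_integral_of_dominated_loc_of_deriv_le
    (F := fun σ t => Φ (t, σ)) (F' := fun σ t => D (t, σ)) (x₀ := s) (a := 0) (b := T)
    (bound := fun _ => C) (μ := MeasureTheory.volume) (Metric.ball_mem_nhds s one_pos)
    (Filter.Eventually.of_forall fun σ =>
      ((hΦ.continuous.comp (continuous_id.prodMk continuous_const)).aestronglyMeasurable))
    ((hΦ.continuous.comp (continuous_id.prodMk continuous_const)).intervalIntegrable 0 T)
    ((hDc.comp (continuous_id.prodMk continuous_const)).aestronglyMeasurable)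
    (Filter.Eventually.of_forall fun t ht σ hσ =>
      hC (t, σ) ⟨Set.uIoc_subset_uIcc ht, Metric.ball_subset_closedBall hσ⟩)
    (intervalIntegrable_const)
    (Filter.Eventually.of_forall fun t ht σ hσ => hasDerivAt_snd_slice (hΦdiff (t, σ)))
  have hA' : HasDerivAt (fun σ => ∫ t in (0 : ℝ)..T, Φ (t, σ))
      (∫ t in (0 : ℝ)..T, D (t, s)) s := hdom.2
  refine ⟨by rw [hAeq]; exact hA'.differentiableAt, ?_⟩
  rw [hAeq, hA'.deriv]
  -- the gradient-in-v along the flow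
  set Vg : ℝ × ℝ → EuclideanSpace ℝ (Fin (2 * N)) :=
    fun p => (2:ℝ) • mulE (G (Y p)) (Z p - Fd (Y p)) with hVgdef
  have hVgrad : ∀ p : ℝ × ℝ, gradient (fun w => lagGen Fd G (Y p) w) (Z p) = Vg p :=
    fun p => gradient_lag_v hGsymm (Y p) (Z p)
  have hVg1 : ContDiff ℝ 1 Vg := by
    have h1 : ContDiff ℝ 1 (fun p : ℝ × ℝ => Z p - Fd (Y p)) :=
      hZ1.sub ((hFd.of_le one_le_two).comp (hY.of_le one_le_two))
    have h2 : ContDiff ℝ 1 (fun p : ℝ × ℝ => mulE (G (Y p)) (Z p - Fd (Y p))) := by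
      have := (isBoundedBilinearMap_apply (𝕜 := ℝ)
        (E := EuclideanSpace ℝ (Fin (2 * N))) (F := EuclideanSpace ℝ (Fin (2 * N)))).contDiff
        (n := 1)
      exact this.comp
        (((mulECLM.contDiff).comp ((hG.of_le one_le_two).comp (hY.of_le one_le_two))).prodMk h1)
    exact (contDiff_const (c := (2:ℝ))).smul h2
  obtain ⟨hVgdiff, hVgfc⟩ := contDiff_one_iff_fderiv.mp hVg1
  obtain ⟨hWdiff, hWfc⟩ := contDiff_one_iff_fderiv.mp hW1
  have hcs : Continuous (fun t : ℝ => ((t, s) : ℝ × ℝ)) := continuous_id.prodMk continuous_const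
  -- boundary-in-s derivative vanishes at t = 0 and t = T
  have hWconst : ∀ t₀ : ℝ, (∀ σ ∈ Set.Icc (0:ℝ) smax, X t₀ σ = X t₀ s) → W' (t₀, s) = 0 := by
    intro t₀ h
    rw [← hWs t₀ s]
    have hev : (fun σ' => X t₀ σ') =ᶠ[nhds s] (fun _ => X t₀ s) := by
      filter_upwards [Ioo_mem_nhds hs0 hs1] with σ hσ
      exact h σ ⟨le_of_lt hσ.1, le_of_lt hσ.2⟩
    rw [hev.deriv_eq, deriv_const]
  have hW0 : W' (0, s) = 0 := hWconst 0 fun σ hσ => by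
    rw [(hbd σ hσ).1, (hbd s ⟨le_of_lt hs0, le_of_lt hs1⟩).1]
  have hWT : W' (T, s) = 0 := hWconst T fun σ hσ => by
    rw [(hbd σ hσ).2, (hbd s ⟨le_of_lt hs0, le_of_lt hs1⟩).2]
  -- the two auxiliary real functions
  have hφ' : ∀ t : ℝ, HasDerivAt (fun τ => ⟪Vg (τ, s), W' (τ, s)⟫)
      (⟪Vg (t, s), fderiv ℝ W' (t, s) (1, 0)⟫ + ⟪fderiv ℝ Vg (t, s) (1, 0), W' (t, s)⟫) t :=
    fun t => (hasDerivAt_fst_slice (hVgdiff (t, s))).inner ℝ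
      (hasDerivAt_fst_slice (hWdiff (t, s)))
  have hψc : Continuous (fun t : ℝ =>
      ⟪Vg (t, s), fderiv ℝ W' (t, s) (1, 0)⟫ + ⟪fderiv ℝ Vg (t, s) (1, 0), W' (t, s)⟫) := by
    have c1 : Continuous (fun t : ℝ => Vg (t, s)) := hVg1.continuous.comp hcs
    have c2 : Continuous (fun t : ℝ => W' (t, s)) := hW1.continuous.comp hcs
    have c3 : Continuous (fun t : ℝ => fderiv ℝ W' (t, s) (1, 0)) :=
      ((ContinuousLinearMap.apply ℝ (EuclideanSpace ℝ (Fin (2 * N)))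
        ((1:ℝ), (0:ℝ))).continuous).comp (hWfc.comp hcs)
    have c4 : Continuous (fun t : ℝ => fderiv ℝ Vg (t, s) (1, 0)) :=
      ((ContinuousLinearMap.apply ℝ (EuclideanSpace ℝ (Fin (2 * N)))
        ((1:ℝ), (0:ℝ))).continuous).comp (hVgfc.comp hcs)
    exact (c1.inner c3).add (c4.inner c2)
  have hqc : Continuous (fun t : ℝ => ⟪mulE (G (X t s)) (W' (t, s)), W' (t, s)⟫) := by
    have c2 : Continuous (fun t : ℝ => W' (t, s)) := hW1.continuous.comp hcs
    have c5 : Continuous (fun t : ℝ => mulE (G (X t s)) (W' (t, s))) := by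
      have := (isBoundedBilinearMap_apply (𝕜 := ℝ)
        (E := EuclideanSpace ℝ (Fin (2 * N))) (F := EuclideanSpace ℝ (Fin (2 * N)))).continuous
      exact this.comp ((mulECLM.continuous.comp
        (hG.continuous.comp (hY.continuous.comp hcs))).prodMk c2)
    exact c5.inner c2
  -- the key pointwise identity on [0, T]
  have hkey : ∀ t ∈ Set.Icc (0:ℝ) T, D (t, s)
      = (⟪Vg (t, s), fderiv ℝ W' (t, s) (1, 0)⟫ + ⟪fderiv ℝ Vg (t, s) (1, 0), W' (t, s)⟫)
        - ⟪mulE (G (X t s)) (W' (t, s)), W' (t, s)⟫ := by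
    intro t ht
    -- chain rule for D
    have hg' : HasFDerivAt (fun p : ℝ × ℝ => ((Y p, Z p) :
          EuclideanSpace ℝ (Fin (2 * N)) × EuclideanSpace ℝ (Fin (2 * N))))
        ((fderiv ℝ Y (t,s)).prod (fderiv ℝ Z (t,s))) (t,s) :=
      ((hYd (t,s)).hasFDerivAt).prodMk ((hZ1.differentiable (by norm_num) (t,s)).hasFDerivAt)
    have hLd : DifferentiableAt ℝ
        (fun pp : EuclideanSpace ℝ (Fin (2 * N)) × EuclideanSpace ℝ (Fin (2 * N)) =>
          lagGen Fd G pp.1 pp.2) (Y (t,s), Z (t,s)) :=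
      ((contDiff_lag hFd hG).differentiable (by norm_num)) _
    have hchain : HasFDerivAt Φ
        ((fderiv ℝ (fun pp : EuclideanSpace ℝ (Fin (2 * N)) × EuclideanSpace ℝ (Fin (2 * N)) =>
          lagGen Fd G pp.1 pp.2) (Y (t,s), Z (t,s))).comp
            ((fderiv ℝ Y (t,s)).prod (fderiv ℝ Z (t,s)))) (t,s) :=
      (hLd.hasFDerivAt.comp (t,s) hg' :)
    have hDeq : D (t, s) = fderiv ℝ
        (fun pp : EuclideanSpace ℝ (Fin (2 * N)) × EuclideanSpace ℝ (Fin (2 * N)) =>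
          lagGen Fd G pp.1 pp.2) (Y (t,s), Z (t,s)) (W' (t,s), fderiv ℝ Z (t,s) (0,1)) := by
      show fderiv ℝ Φ (t, s) (0, 1) = _
      rw [hchain.fderiv]
      rfl
    have hclair : fderiv ℝ Z (t,s) ((0:ℝ),(1:ℝ)) = fderiv ℝ W' (t,s) ((1:ℝ),(0:ℝ)) :=
      fderiv_fderiv_symm hY (t,s) (1,0) (0,1)
    rw [hDeq, inner_gradient_slice_lag hFd hG, hclair, hVgrad (t,s)]
    -- now use the PDE
    have hp := hPDE t ht s ⟨le_of_lt hs0, le_of_lt hs1⟩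
    have hfun : (fun τ => gradient (fun w => lagGen Fd G (X τ s) w)
        (deriv (fun τ' => X τ' s) τ)) = fun τ => Vg (τ, s) := by
      funext τ
      rw [hZt τ s]
      exact hVgrad (τ, s)
    have hderiv_V : deriv (fun τ => Vg (τ, s)) t = fderiv ℝ Vg (t, s) (1, 0) :=
      (hasDerivAt_fst_slice (hVgdiff (t,s))).deriv
    rw [hfun, hderiv_V, hWs t s, hZt t s] at hp
    have hGu : mulE (G (X t s)) (W' (t, s))
        = fderiv ℝ Vg (t, s) ((1:ℝ), (0:ℝ))
          - gradient (fun y => lagGen Fd G y (Z (t, s))) (X t s) := by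
      apply WithLp.ofLp_injective
      show (G (X t s)) *ᵥ (W' (t, s)).ofLp = _
      rw [hp]
      show (G (X t s)) *ᵥ ((G (X t s))⁻¹ *ᵥ _) = _
      rw [Matrix.mulVec_mulVec, Matrix.mul_nonsing_inv _ ((hGpos _).det_pos.ne'.isUnit),
        Matrix.one_mulVec, WithLp.ofLp_sub]
    rw [hGu, inner_sub_left]
    have hYX : Y (t, s) = X t s := rfl
    rw [hYX]
    ring
  -- put everything together
  have hcong : (∫ t in (0:ℝ)..T, D (t, s))
      = ∫ t in (0:ℝ)..T,
          ((⟪Vg (t, s), fderiv ℝ W' (t, s) (1, 0)⟫ + ⟪fderiv ℝ Vg (t, s) (1, 0), W' (t, s)⟫)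
            - ⟪mulE (G (X t s)) (W' (t, s)), W' (t, s)⟫) := by
    refine intervalIntegral.integral_congr fun t ht => ?_
    exact hkey t (by rwa [Set.uIcc_of_le (le_of_lt hT)] at ht)
  rw [hcong, intervalIntegral.integral_sub ((hψc.intervalIntegrable 0 T))
    ((hqc.intervalIntegrable 0 T))]
  have hFTC : (∫ t in (0:ℝ)..T,
      (⟪Vg (t, s), fderiv ℝ W' (t, s) (1, 0)⟫ + ⟪fderiv ℝ Vg (t, s) (1, 0), W' (t, s)⟫))
      = ⟪Vg (T, s), W' (T, s)⟫ - ⟪Vg (0, s), W' (0, s)⟫ :=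
    intervalIntegral.integral_eq_sub_of_hasDerivAt (fun t _ => hφ' t)
      (hψc.intervalIntegrable 0 T)
  rw [hFTC, hW0, hWT, inner_zero_right, inner_zero_right, sub_zero, zero_sub,
    neg_le, neg_zero]
  refine intervalIntegral.integral_nonneg (le_of_lt hT) fun u hu => ?_
  rw [real_inner_comm, ← dot_eq_inner]
  simpa [mulE_apply] using (hGpos (X u s)).posSemidef.re_dotProduct_nonneg
    ((W' (u, s)) : Fin (2 * N) → ℝ)
end

section
/- (Monotonicity of the constrained action under the constrained AGHF.) Let J be a finite index set, g_j : ℝ^{2N} → ℝ be C² for each j ∈ J, b : ℝ → ℝ be C² with b ≥ 0, and define the constrained Lagrangian L_cons(x, v) = L(x, v) + Σ_{j∈J} b(g_j(x)). Let X : [0, T] × [0, s_max] → ℝ^{2N} be C² (jointly in (t, s)) and satisfy the constrained AGHF PDE ∂X/∂s(t, s) = G(X(t,s))⁻¹ ( d/dt [∇_v L(X(t,s), ∂X/∂t(t,s))] − ∇_x L(X(t,s), ∂X/∂t(t,s)) − Σ_{j∈J} ∇_x [ b(g_j(·)) ](X(t,s)) ), with boundary conditions X(0, s) = x₀ and X(T,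 s) = x_f for all s ∈ [0, s_max]. Then the constrained action s ↦ A_cons(X(·, s)) = ∫₀ᵀ L_cons(X(t,s), ∂X/∂t(t,s)) dt is differentiable on (0, s_max) with d/ds A_cons(X(·, s)) ≤ 0 for every s ∈ (0, s_max). -/
open Matrix

attribute [local instance] Matrix.normedAddCommGroup Matrix.normedSpace

/- ### Auxiliary material -/

open scoped RealInnerProductSpace

noncomputable def entryCLM {n : ℕ} (i k : Fin n) : Matrix (Fin n) (Fin n) ℝ →L[ℝ] ℝ :=
  LinearMap.mkContinuous (Matrix.entryLinearMap ℝ ℝ i k) 1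
    (fun M => by simpa using M.norm_entry_le_entrywise_sup_norm (i := i) (j := k))

theorem lagGen_eq {n : ℕ} (Fd : EuclideanSpace ℝ (Fin n) → EuclideanSpace ℝ (Fin n))
    (G : EuclideanSpace ℝ (Fin n) → Matrix (Fin n) (Fin n) ℝ)
    (x v : EuclideanSpace ℝ (Fin n)) :
    lagGen Fd G x v = ∑ i, ((v - Fd x) i * ∑ k, G x i k * (v - Fd x) k) := by
  simp [lagGen, dotProduct, Matrix.mulVec, dotProduct]

theorem lagGen_contDiff {n : ℕ} {Fd : EuclideanSpace ℝ (Fin n) → EuclideanSpace ℝ (Fin n)}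
    {G : EuclideanSpace ℝ (Fin n) → Matrix (Fin n) (Fin n) ℝ}
    (hFd : ContDiff ℝ 2 Fd) (hG : ContDiff ℝ 2 G) :
    ContDiff ℝ 2 (fun p : EuclideanSpace ℝ (Fin n) × EuclideanSpace ℝ (Fin n) =>
      lagGen Fd G p.1 p.2) := by
  have hcoord : ∀ i, ContDiff ℝ 2 (fun p : EuclideanSpace ℝ (Fin n) × EuclideanSpace ℝ (Fin n) =>
      (p.2 - Fd p.1) i) := by
    intro i
    have : ContDiff ℝ 2 (fun p : EuclideanSpace ℝ (Fin n) × EuclideanSpace ℝ (Fin n) =>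
        p.2 - Fd p.1) := contDiff_snd.sub (hFd.comp contDiff_fst)
    exact (EuclideanSpace.proj i : EuclideanSpace ℝ (Fin n) →L[ℝ] ℝ).contDiff.comp this
  have hGij : ∀ i k, ContDiff ℝ 2 (fun p : EuclideanSpace ℝ (Fin n) × EuclideanSpace ℝ (Fin n) =>
      G p.1 i k) := fun i k =>
    (entryCLM i k).contDiff.comp (hG.comp contDiff_fst)
  have : ContDiff ℝ 2 (fun p : EuclideanSpace ℝ (Fin n) × EuclideanSpace ℝ (Fin n) =>
      ∑ i, ((p.2 - Fd p.1) i * ∑ k, G p.1 i k * (p.2 - Fd p.1) k)) := by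
    apply ContDiff.sum; intro i _
    exact (hcoord i).mul (ContDiff.sum fun k _ => (hGij i k).mul (hcoord k))
  have heq : (fun p : EuclideanSpace ℝ (Fin n) × EuclideanSpace ℝ (Fin n) =>
      lagGen Fd G p.1 p.2) = fun p =>
      ∑ i, ((p.2 - Fd p.1) i * ∑ k, G p.1 i k * (p.2 - Fd p.1) k) :=
    funext fun p => lagGen_eq Fd G p.1 p.2
  rw [heq]; exact this

section InnerAux

variable {E' : Type*} [NormedAddCommGroup E'] [InnerProductSpace ℝ E'] [CompleteSpace E']

noncomputable def dualCLE (E' : Type*) [NormedAddCommGroup E'] [InnerProductSpace ℝ E']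
    [CompleteSpace E'] : StrongDual ℝ E' ≃L[ℝ] E' :=
  (InnerProductSpace.toDual ℝ E').symm.toContinuousLinearEquiv

theorem dualCLE_inner (φ : StrongDual ℝ E') (u : E') : ⟪dualCLE E' φ, u⟫ = φ u := by
  simp only [dualCLE, LinearIsometryEquiv.coe_toContinuousLinearEquiv]
  exact InnerProductSpace.toDual_symm_apply

theorem gradient_eq_dualCLE (f : E' → ℝ) (x : E') : gradient f x = dualCLE E' (fderiv ℝ f x) := by
  simp only [dualCLE, LinearIsometryEquiv.coe_toContinuousLinearEquiv]
  rfl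

theorem inner_gradient_eq (f : E' → ℝ) (x u : E') : ⟪gradient f x, u⟫ = fderiv ℝ f x u := by
  rw [gradient_eq_dualCLE, dualCLE_inner]

end InnerAux

section PartialAux

variable {E₁ E₂ : Type*} [NormedAddCommGroup E₁] [NormedSpace ℝ E₁]
  [NormedAddCommGroup E₂] [NormedSpace ℝ E₂]

theorem fderiv_slice_fst {φ : E₁ × E₂ → ℝ} {x : E₁} {v : E₂}
    (h : DifferentiableAt ℝ φ (x, v)) (w : E₁) :
    fderiv ℝ (fun y => φ (y, v)) x w = fderiv ℝ φ (x, v) (w, 0) := by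
  have h1 : HasFDerivAt (fun y : E₁ => (y, v))
      ((ContinuousLinearMap.id ℝ E₁).prod 0) x :=
    (hasFDerivAt_id x).prodMk (hasFDerivAt_const v x)
  have h2 := (h.hasFDerivAt.comp x h1).fderiv
  rw [show (fun y : E₁ => φ (y, v)) = φ ∘ (fun y : E₁ => (y, v)) from rfl, h2]
  simp

theorem fderiv_slice_snd {φ : E₁ × E₂ → ℝ} {x : E₁} {v : E₂}
    (h : DifferentiableAt ℝ φ (x, v)) (m : E₂) :
    fderiv ℝ (fun u => φ (x, u)) v m = fderiv ℝ φ (x, v) (0, m) := by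
  have h1 : HasFDerivAt (fun u : E₂ => (x, u))
      ((0 : E₂ →L[ℝ] E₁).prod (ContinuousLinearMap.id ℝ E₂)) v :=
    (hasFDerivAt_const x v).prodMk (hasFDerivAt_id v)
  have h2 := (h.hasFDerivAt.comp v h1).fderiv
  rw [show (fun u : E₂ => φ (x, u)) = φ ∘ (fun u : E₂ => (x, u)) from rfl, h2]
  simp

theorem fderiv_slice_snd_clm {φ : E₁ × E₂ → ℝ} {x : E₁} {v : E₂}
    (h : DifferentiableAt ℝ φ (x, v)) :
    fderiv ℝ (fun u => φ (x, u)) v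
      = (fderiv ℝ φ (x, v)).comp (ContinuousLinearMap.inr ℝ E₁ E₂) := by
  ext m
  rw [fderiv_slice_snd h]
  simp

end PartialAux

theorem euclid_inner_eq_dot {n : ℕ} (u v : EuclideanSpace ℝ (Fin n)) :
    ⟪u, v⟫ = (fun i => u i) ⬝ᵥ (fun i => v i) := by
  simp [PiLp.inner_apply, dotProduct, RCLike.inner_apply, mul_comm]

/-- A test of the skeleton compiles. -/
example : True := trivial
/-- **monotonicity of the constrained action under the constrained
AGHF.**  If `X` is `C²` and satisfies the constrained AGHF PDE
`∂X/∂s = G(X)⁻¹ ( d/dt[∇_v L(X, ∂X/∂t)] − ∇_x L(X, ∂X/∂t) − Σⱼ ∇_x[b ∘ gⱼ](X) )`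
with fixed boundary conditions, then the constrained action
`s ↦ A_cons(X(·,s)) = ∫₀ᵀ ( L(X, ∂X/∂t) + Σⱼ b(gⱼ(X)) ) dt` is differentiable on
`(0, s_max)` with nonpositive derivative. -/
theorem constrainedAction_nonincreasing_along_constrained_AGHF (N : ℕ) (hN : 0 < N)
    (T : ℝ) (hT : 0 < T) (smax : ℝ) (hsmax : 0 < smax)
    (Fd : EuclideanSpace ℝ (Fin (2 * N)) → EuclideanSpace ℝ (Fin (2 * N)))
    (hFd : ContDiff ℝ 2 Fd)
    (G : EuclideanSpace ℝ (Fin (2 * N)) → Matrix (Fin (2 * N)) (Fin (2 * N)) ℝ)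
    (hG : ContDiff ℝ 2 G)
    (hGsymm : ∀ x, (G x).IsSymm) (hGpos : ∀ x, (G x).PosDef)
    (J : Type) [Fintype J] (g : J → EuclideanSpace ℝ (Fin (2 * N)) → ℝ)
    (hg : ∀ j, ContDiff ℝ 2 (g j))
    (b : ℝ → ℝ) (hb : ContDiff ℝ 2 b) (hb0 : ∀ y, 0 ≤ b y)
    (x₀ xf : EuclideanSpace ℝ (Fin (2 * N)))
    (X : ℝ → ℝ → EuclideanSpace ℝ (Fin (2 * N)))
    (hX : ContDiff ℝ 2 (fun p : ℝ × ℝ => X p.1 p.2))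
    (hbd : ∀ s ∈ Set.Icc (0 : ℝ) smax, X 0 s = x₀ ∧ X T s = xf)
    (hPDE : ∀ t ∈ Set.Icc (0 : ℝ) T, ∀ s ∈ Set.Icc (0 : ℝ) smax,
      deriv (fun σ => X t σ) s =
        (G (X t s))⁻¹ *ᵥ
          ((deriv (fun τ =>
              gradient (fun w => lagGen Fd G (X τ s) w) (deriv (fun τ' => X τ' s) τ)) t)
            - gradient (fun y => lagGen Fd G y (deriv (fun τ => X τ s) t)) (X t s)
            - ∑ j, gradient (fun y => b (g j y)) (X t s))) :
    ∀ s ∈ Set.Ioo (0 : ℝ) smax,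
      DifferentiableAt ℝ
        (fun σ => ∫ t in (0 : ℝ)..T,
          (lagGen Fd G (X t σ) (deriv (fun τ => X τ σ) t) +
            ∑ j, b (g j (X t σ)))) s ∧
      deriv
        (fun σ => ∫ t in (0 : ℝ)..T,
          (lagGen Fd G (X t σ) (deriv (fun τ => X τ σ) t) +
            ∑ j, b (g j (X t σ)))) s ≤ 0 := by
  classical
  intro s hs
  have hsIcc : s ∈ Set.Icc (0 : ℝ) smax := ⟨hs.1.le, hs.2.le⟩
  have h12 : (1 : WithTop ℕ∞) ≤ 2 := by norm_num
  set F2 : ℝ × ℝ → EuclideanSpace ℝ (Fin (2 * N)) := fun p => X p.1 p.2 with hF2def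
  have hF2d : Differentiable ℝ F2 := hX.differentiable (by norm_num)
  have hfd1 : ContDiff ℝ 1 (fderiv ℝ F2) := hX.fderiv_right (m := 1) (by norm_num)
  set Xt : ℝ × ℝ → EuclideanSpace ℝ (Fin (2 * N)) :=
    fun p => fderiv ℝ F2 p ((1 : ℝ), (0 : ℝ)) with hXtdef
  set Xs : ℝ × ℝ → EuclideanSpace ℝ (Fin (2 * N)) :=
    fun p => fderiv ℝ F2 p ((0 : ℝ), (1 : ℝ)) with hXsdef
  have hXtC1 : ContDiff ℝ 1 Xt := hfd1.clm_apply contDiff_const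
  have hXsC1 : ContDiff ℝ 1 Xs := hfd1.clm_apply contDiff_const
  have hXt_eq : ∀ t σ : ℝ, deriv (fun τ => X τ σ) t = Xt (t, σ) := by
    intro t σ
    have h1 : HasDerivAt (fun τ : ℝ => (τ, σ)) ((1 : ℝ), (0 : ℝ)) t :=
      (hasDerivAt_id t).prodMk (hasDerivAt_const t σ)
    exact ((hF2d (t, σ)).hasFDerivAt.comp_hasDerivAt t h1).deriv
  have hXs_eq : ∀ t σ : ℝ, deriv (fun σ' => X t σ') σ = Xs (t, σ) := by
    intro t σ
    have h1 : HasDerivAt (fun σ' : ℝ => (t, σ')) ((0 : ℝ), (1 : ℝ)) σ :=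
      (hasDerivAt_const σ t).prodMk (hasDerivAt_id σ)
    exact ((hF2d (t, σ)).hasFDerivAt.comp_hasDerivAt σ h1).deriv
  have hsymm : ∀ p : ℝ × ℝ,
      fderiv ℝ (fderiv ℝ F2) p ((0 : ℝ), (1 : ℝ)) ((1 : ℝ), (0 : ℝ))
        = fderiv ℝ (fderiv ℝ F2) p ((1 : ℝ), (0 : ℝ)) ((0 : ℝ), (1 : ℝ)) :=
    fun p => (hX.contDiffAt.isSymmSndFDerivAt (by norm_num)) _ _
  have hXs_t : ∀ t σ : ℝ, HasDerivAt (fun τ => Xs (τ, σ))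
      (fderiv ℝ (fderiv ℝ F2) (t, σ) ((1 : ℝ), (0 : ℝ)) ((0 : ℝ), (1 : ℝ))) t := by
    intro t σ
    have h1 : HasDerivAt (fun τ : ℝ => (τ, σ)) ((1 : ℝ), (0 : ℝ)) t :=
      (hasDerivAt_id t).prodMk (hasDerivAt_const t σ)
    have hc : HasDerivAt (fun τ => fderiv ℝ F2 (τ, σ))
        (fderiv ℝ (fderiv ℝ F2) (t, σ) ((1 : ℝ), (0 : ℝ))) t :=
      ((hfd1.differentiable one_ne_zero) (t, σ)).hasFDerivAt.comp_hasDerivAt t h1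
    have := hc.clm_apply (hasDerivAt_const t ((0 : ℝ), (1 : ℝ)))
    simpa using this
  have hXt_fd : ∀ p : ℝ × ℝ, HasFDerivAt Xt
      ((fderiv ℝ (fderiv ℝ F2) p).flip ((1 : ℝ), (0 : ℝ))) p := by
    intro p
    have hc := ((hfd1.differentiable one_ne_zero) p).hasFDerivAt
    have := hc.clm_apply (hasFDerivAt_const ((1 : ℝ), (0 : ℝ)) p)
    simpa using this
  -- the Lagrangian pieces
  set Lag : EuclideanSpace ℝ (Fin (2 * N)) × EuclideanSpace ℝ (Fin (2 * N)) → ℝ :=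
    fun q => lagGen Fd G q.1 q.2 with hLagdef
  set Pen : EuclideanSpace ℝ (Fin (2 * N)) × EuclideanSpace ℝ (Fin (2 * N)) → ℝ :=
    fun q => ∑ j, b (g j q.1) with hPendef
  have hLagC2 : ContDiff ℝ 2 Lag := lagGen_contDiff hFd hG
  have hPenC2 : ContDiff ℝ 2 Pen := ContDiff.sum fun j _ => (hb.comp (hg j)).comp contDiff_fst
  set Lam : EuclideanSpace ℝ (Fin (2 * N)) × EuclideanSpace ℝ (Fin (2 * N)) → ℝ :=
    fun q => Lag q + Pen q with hLamdef
  have hLamC2 : ContDiff ℝ 2 Lam := hLagC2.add hPenC2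
  set Φ : ℝ × ℝ → ℝ := fun p => Lam (F2 p, Xt p) with hPhidef
  have hΦC1 : ContDiff ℝ 1 Φ := (hLamC2.of_le h12).comp ((hX.of_le h12).prodMk hXtC1)
  set DΦ : ℝ × ℝ → ℝ := fun p => fderiv ℝ Φ p ((0 : ℝ), (1 : ℝ)) with hDPhidef
  have hDΦc : Continuous DΦ :=
    ((hΦC1.fderiv_right (m := 0) (by norm_num)).continuous.clm_apply continuous_const)
  -- Step 1: differentiation under the integral sign
  have key : HasDerivAt (fun σ => ∫ t in (0 : ℝ)..T, Φ (t, σ))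
      (∫ t in (0 : ℝ)..T, DΦ (t, s)) s := by
    obtain ⟨C, hC⟩ := (isCompact_Icc.prod isCompact_Icc :
        IsCompact (Set.Icc (0 : ℝ) T ×ˢ Set.Icc (s - 1) (s + 1))).exists_bound_of_continuousOn
      hDΦc.continuousOn
    refine (intervalIntegral.hasDerivAt_integral_of_dominated_loc_of_deriv_le
      (F := fun σ t => Φ (t, σ)) (F' := fun σ t => DΦ (t, σ)) (bound := fun _ => C)
      (Metric.ball_mem_nhds s one_pos) ?_ ?_ ?_ ?_ ?_ ?_).2
    · exact Filter.Eventually.of_forall fun σ =>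
        (hΦC1.continuous.comp (continuous_id.prodMk continuous_const)).aestronglyMeasurable
    · exact (hΦC1.continuous.comp (continuous_id.prodMk continuous_const)).intervalIntegrable 0 T
    · exact (hDΦc.comp (continuous_id.prodMk continuous_const)).aestronglyMeasurable
    · refine Filter.Eventually.of_forall fun t ht => fun σ hσ => ?_
      rw [Set.uIoc_of_le hT.le] at ht
      refine hC (t, σ) ?_
      rw [Metric.mem_ball, Real.dist_eq] at hσ
      exact Set.mem_prod.2 ⟨Set.Ioc_subset_Icc_self ht, by constructor <;> [linarith [abs_lt.1 hσ]; linarith [(abs_lt.1 hσ).2]]⟩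
    · exact intervalIntegrable_const
    · refine Filter.Eventually.of_forall fun t ht => fun σ hσ => ?_
      have h1 : HasDerivAt (fun σ' : ℝ => (t, σ')) ((0 : ℝ), (1 : ℝ)) σ :=
        (hasDerivAt_const σ t).prodMk (hasDerivAt_id σ)
      exact ((hΦC1.differentiable one_ne_zero (t, σ)).hasFDerivAt.comp_hasDerivAt σ h1)
  have hfun_eq : (fun σ => ∫ t in (0 : ℝ)..T,
      (lagGen Fd G (X t σ) (deriv (fun τ => X τ σ) t) + ∑ j, b (g j (X t σ))))
      = fun σ => ∫ t in (0 : ℝ)..T, Φ (t, σ) := by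
    funext σ
    refine intervalIntegral.integral_congr fun t _ => ?_
    simp only [hXt_eq, hPhidef, hLamdef, hLagdef, hPendef, hF2def]
  rw [hfun_eq]
  refine ⟨key.differentiableAt, ?_⟩
  rw [key.deriv]
    -- Step 2: the Euler–Lagrange / PDE pointwise analysis
  set P : ℝ → EuclideanSpace ℝ (Fin (2 * N)) := fun τ =>
    gradient (fun w => lagGen Fd G (X τ s) w) (deriv (fun τ' => X τ' s) τ) with hPdef
  set R : ℝ → (EuclideanSpace ℝ (Fin (2 * N)) →L[ℝ] ℝ) := fun τ =>
    (fderiv ℝ Lag (F2 (τ, s), Xt (τ, s))).comp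
      (ContinuousLinearMap.inr ℝ (EuclideanSpace ℝ (Fin (2 * N))) (EuclideanSpace ℝ (Fin (2 * N))))
    with hRdef
  have hγC1 : ContDiff ℝ 1 (fun τ : ℝ => (F2 (τ, s), Xt (τ, s))) :=
    ((hX.of_le h12).comp (contDiff_id.prodMk contDiff_const)).prodMk
      (hXtC1.comp (contDiff_id.prodMk contDiff_const))
  have hRC1 : ContDiff ℝ 1 R := by
    have h1 : ContDiff ℝ 1 (fun τ : ℝ => fderiv ℝ Lag (F2 (τ, s), Xt (τ, s))) :=
      (hLagC2.fderiv_right (m := 1) (by norm_num)).comp hγC1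
    rw [hRdef]
    exact ((ContinuousLinearMap.compL ℝ (EuclideanSpace ℝ (Fin (2 * N)))
      (EuclideanSpace ℝ (Fin (2 * N)) × EuclideanSpace ℝ (Fin (2 * N))) ℝ).flip
      (ContinuousLinearMap.inr ℝ _ _)).contDiff.comp h1
  have hP_eqR : ∀ τ : ℝ, P τ = dualCLE _ (R τ) := by
    intro τ
    show gradient (fun w => lagGen Fd G (X τ s) w) (deriv (fun τ' => X τ' s) τ)
      = dualCLE _ ((fderiv ℝ Lag (F2 (τ, s), Xt (τ, s))).comp
        (ContinuousLinearMap.inr ℝ (EuclideanSpace ℝ (Fin (2 * N)))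
          (EuclideanSpace ℝ (Fin (2 * N)))))
    rw [hXt_eq, gradient_eq_dualCLE]
    congr 1
    exact fderiv_slice_snd_clm ((hLagC2.differentiable (by norm_num)) _)
  have hPda : ∀ t : ℝ, HasDerivAt P (dualCLE _ (deriv R t)) t := by
    intro t
    have h1 : HasDerivAt R (deriv R t) t := ((hRC1.differentiable one_ne_zero) t).hasDerivAt
    have h2 := ((dualCLE (EuclideanSpace ℝ (Fin (2 * N)))).toContinuousLinearMap.hasFDerivAt
      (x := R t)).comp_hasDerivAt t h1
    refine h2.congr_of_eventuallyEq (Filter.Eventually.of_forall fun τ => ?_)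
    simpa using hP_eqR τ
  have hPd_eq : ∀ t : ℝ, deriv P t = dualCLE _ (deriv R t) := fun t => (hPda t).deriv
  -- the boundary-term function and integration by parts
  set Bf : ℝ → ℝ := fun τ => R τ (Xs (τ, s)) with hBfdef
  have hXsτC1 : ContDiff ℝ 1 (fun τ : ℝ => Xs (τ, s)) :=
    hXsC1.comp (contDiff_id.prodMk contDiff_const)
  set B' : ℝ → ℝ := fun t => deriv R t (Xs (t, s))
      + R t (fderiv ℝ (fderiv ℝ F2) (t, s) ((1 : ℝ), (0 : ℝ)) ((0 : ℝ), (1 : ℝ))) with hB'def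
  have hc3 : Continuous fun t : ℝ =>
      fderiv ℝ (fderiv ℝ F2) (t, s) ((1 : ℝ), (0 : ℝ)) ((0 : ℝ), (1 : ℝ)) :=
    ((((hfd1.fderiv_right (m := 0) (by norm_num)).continuous.comp
      (continuous_id.prodMk continuous_const)).clm_apply continuous_const).clm_apply
      continuous_const)
  have hB'c : Continuous B' := by
    rw [hB'def]
    exact ((hRC1.continuous_deriv le_rfl).clm_apply hXsτC1.continuous).add
      (hRC1.continuous.clm_apply hc3)
  have hBd : ∀ t : ℝ, HasDerivAt Bf (B' t) t := by
    intro t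
    have h1 : HasDerivAt R (deriv R t) t := ((hRC1.differentiable one_ne_zero) t).hasDerivAt
    exact h1.clm_apply (hXs_t t s)
  have hint_B' : ∫ t in (0 : ℝ)..T, B' t = Bf T - Bf 0 :=
    intervalIntegral.integral_eq_sub_of_hasDerivAt (fun t _ => hBd t)
      (hB'c.intervalIntegrable 0 T)
  have hIoo_nhds : Set.Ioo (0 : ℝ) smax ∈ nhds s := isOpen_Ioo.mem_nhds hs
  have hbdT : Xs (T, s) = 0 := by
    rw [← hXs_eq]
    have hev : (fun σ' => X T σ') =ᶠ[nhds s] fun _ => xf := by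
      filter_upwards [hIoo_nhds] with σ hσ
      exact (hbd σ ⟨hσ.1.le, hσ.2.le⟩).2
    rw [hev.deriv_eq]
    exact deriv_const s xf
  have hbd0 : Xs (0, s) = 0 := by
    rw [← hXs_eq]
    have hev : (fun σ' => X 0 σ') =ᶠ[nhds s] fun _ => x₀ := by
      filter_upwards [hIoo_nhds] with σ hσ
      exact (hbd σ ⟨hσ.1.le, hσ.2.le⟩).1
    rw [hev.deriv_eq]
    exact deriv_const s x₀
  have hBT : Bf T = 0 := by rw [hBfdef]; simp [hbdT]
  have hB0 : Bf 0 = 0 := by rw [hBfdef]; simp [hbd0]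
  -- the quadratic form
  set q : ℝ → ℝ := fun t =>
    ⟪Xs (t, s), (WithLp.equiv 2 (Fin (2 * N) → ℝ)).symm (G (X t s) *ᵥ Xs (t, s))⟫ with hqdef
  have hqnn : ∀ t : ℝ, 0 ≤ q t := by
    intro t
    have h := (posSemidef_iff_dotProduct_mulVec.mp (hGpos (X t s)).posSemidef).2 (fun i => Xs (t, s) i)
    show 0 ≤ ⟪Xs (t, s), (WithLp.equiv 2 (Fin (2 * N) → ℝ)).symm (G (X t s) *ᵥ Xs (t, s))⟫
    rw [euclid_inner_eq_dot]
    simpa [star_trivial, WithLp.equiv_symm_apply, PiLp.toLp_apply] using h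
  have hqc : Continuous q := by
    rw [hqdef]
    have h1 : Continuous fun t : ℝ => G (X t s) :=
      hG.continuous.comp ((hX.continuous.comp (continuous_id.prodMk continuous_const)))
    have h2 : Continuous fun t : ℝ => (G (X t s) *ᵥ Xs (t, s) : Fin (2 * N) → ℝ) :=
      h1.matrix_mulVec ((PiLp.continuous_ofLp 2 fun _ : Fin (2 * N) => ℝ).comp
        hXsτC1.continuous)
    exact hXsτC1.continuous.inner
      ((PiLp.continuous_toLp 2 fun _ : Fin (2 * N) => ℝ).comp h2)
    -- Step 3: pointwise identity DΦ(t,s) = B'(t) - q(t) on [0,T]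
  have hptw : ∀ t ∈ Set.uIcc (0 : ℝ) T, DΦ (t, s) = B' t - q t := by
    intro t ht
    rw [Set.uIcc_of_le hT.le] at ht
    have hxdiff : DifferentiableAt ℝ Lam (F2 (t, s), Xt (t, s)) :=
      (hLamC2.differentiable (by norm_num)) _
    have hHfd : HasFDerivAt (fun p : ℝ × ℝ => (F2 p, Xt p))
        ((fderiv ℝ F2 (t, s)).prod ((fderiv ℝ (fderiv ℝ F2) (t, s)).flip ((1 : ℝ), (0 : ℝ))))
        (t, s) :=
      (hF2d (t, s)).hasFDerivAt.prodMk (hXt_fd (t, s))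
    have hΦfd : HasFDerivAt Φ
        ((fderiv ℝ Lam (F2 (t, s), Xt (t, s))).comp
          ((fderiv ℝ F2 (t, s)).prod ((fderiv ℝ (fderiv ℝ F2) (t, s)).flip ((1 : ℝ), (0 : ℝ)))))
        (t, s) := HasFDerivAt.comp (g := Lam) (t, s) hxdiff.hasFDerivAt hHfd
    set D2 : EuclideanSpace ℝ (Fin (2 * N)) :=
      fderiv ℝ (fderiv ℝ F2) (t, s) ((1 : ℝ), (0 : ℝ)) ((0 : ℝ), (1 : ℝ)) with hD2def
    have hDphi : DΦ (t, s) = fderiv ℝ Lam (F2 (t, s), Xt (t, s)) (Xs (t, s), D2) := by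
      show fderiv ℝ Φ (t, s) ((0 : ℝ), (1 : ℝ)) = _
      rw [hΦfd.fderiv]
      simp only [ContinuousLinearMap.comp_apply, ContinuousLinearMap.prod_apply,
        ContinuousLinearMap.flip_apply]
      rw [hsymm (t, s)]
    have hsplit : fderiv ℝ Lam (F2 (t, s), Xt (t, s)) (Xs (t, s), D2)
        = fderiv ℝ Lam (F2 (t, s), Xt (t, s)) (Xs (t, s), 0)
          + fderiv ℝ Lam (F2 (t, s), Xt (t, s)) ((0 : EuclideanSpace ℝ (Fin (2 * N))), D2) := by
      rw [← map_add]
      congr 1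
      simp [Prod.mk_add_mk]
    -- the x-slice
    have hA : DifferentiableAt ℝ (fun y => lagGen Fd G y (Xt (t, s))) (X t s) :=
      ((hLagC2.comp (contDiff_id.prodMk contDiff_const)).differentiable (by norm_num)).differentiableAt
    have hBj : ∀ j, DifferentiableAt ℝ (fun y => b (g j y)) (X t s) :=
      fun j => ((hb.comp (hg j)).differentiable (by norm_num)).differentiableAt
    have hc1 : fderiv ℝ Lam (F2 (t, s), Xt (t, s)) (Xs (t, s), 0)
        = ⟪gradient (fun y => lagGen Fd G y (Xt (t, s))) (X t s), Xs (t, s)⟫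
          + ∑ j, ⟪gradient (fun y => b (g j y)) (X t s), Xs (t, s)⟫ := by
      rw [← fderiv_slice_fst hxdiff (Xs (t, s))]
      have heq : (fun y => Lam (y, Xt (t, s)))
          = fun y => lagGen Fd G y (Xt (t, s)) + ∑ j, b (g j y) := rfl
      rw [heq]
      rw [show F2 (t, s) = X t s from rfl, fderiv_fun_add hA (DifferentiableAt.fun_sum fun j _ => hBj j)]
      rw [ContinuousLinearMap.add_apply, fderiv_fun_sum fun j _ => hBj j]
      rw [ContinuousLinearMap.sum_apply]
      rw [inner_gradient_eq]
      congr 1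
      exact Finset.sum_congr rfl fun j _ => (inner_gradient_eq _ _ _).symm
    -- the v-slice
    have hd1 : fderiv ℝ Lam (F2 (t, s), Xt (t, s)) ((0 : EuclideanSpace ℝ (Fin (2 * N))), D2)
        = R t D2 := by
      rw [← fderiv_slice_snd hxdiff D2]
      have heq : (fun u => Lam (F2 (t, s), u))
          = fun u => Lag (F2 (t, s), u) + ∑ j, b (g j (F2 (t, s))) := rfl
      rw [heq, fderiv_add_const]
      have h2 := fderiv_slice_snd_clm (φ := Lag) (x := F2 (t, s)) (v := Xt (t, s))
        ((hLagC2.differentiable (by norm_num)) _)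
      rw [h2]
    -- the PDE
    have hPDE' := hPDE t ht s hsIcc
    rw [← hPdef] at hPDE'
    simp only [hXt_eq, hXs_eq] at hPDE'
    have hmv : (WithLp.equiv 2 (Fin (2 * N) → ℝ)).symm (G (X t s) *ᵥ Xs (t, s))
        = deriv P t - gradient (fun y => lagGen Fd G y (Xt (t, s))) (X t s)
          - ∑ j, gradient (fun y => b (g j y)) (X t s) := by
      have h0 := congrArg (fun z : Fin (2 * N) → ℝ =>
        (WithLp.equiv 2 (Fin (2 * N) → ℝ)).symm (G (X t s) *ᵥ z)) hPDE'
      rw [h0]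
      show (WithLp.equiv 2 (Fin (2 * N) → ℝ)).symm
        (G (X t s) *ᵥ ((G (X t s))⁻¹ *ᵥ _)) = _
      rw [Matrix.mulVec_mulVec, Matrix.mul_nonsing_inv _ ((hGpos (X t s)).det_pos.ne'.isUnit),
        Matrix.one_mulVec]
      rfl
    -- put things together
    have hRw : deriv R t (Xs (t, s)) = ⟪deriv P t, Xs (t, s)⟫ := by
      rw [hPd_eq t, dualCLE_inner]
    rw [hDphi, hsplit, hc1, hd1]
    have hq_eq : q t = ⟪Xs (t, s),
        (WithLp.equiv 2 (Fin (2 * N) → ℝ)).symm (G (X t s) *ᵥ Xs (t, s))⟫ := rfl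
    have hB'_eq : B' t = deriv R t (Xs (t, s)) + R t D2 := rfl
    rw [hB'_eq, hRw, hq_eq, hmv]
    simp only [inner_sub_left, inner_sub_right, inner_sum, sum_inner,
      real_inner_comm (Xs (t, s))]
    ring
  -- Step 4: conclusion
  have hIeq : ∫ t in (0 : ℝ)..T, DΦ (t, s) = ∫ t in (0 : ℝ)..T, (B' t - q t) :=
    intervalIntegral.integral_congr hptw
  rw [hIeq, intervalIntegral.integral_sub (hB'c.intervalIntegrable 0 T)
    (hqc.intervalIntegrable 0 T), hint_B', hBT, hB0]
  have hqint : 0 ≤ ∫ t in (0 : ℝ)..T, q t :=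
    intervalIntegral.integral_nonneg hT.le fun u _ => hqnn u
  linarith
end
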